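/- arXiv:2206.14298 — 2 statements merged into one kernel-verified Lean document; each statement's English description precedes it below -/
import Mathlib

section
/- Consider the Luby universal cutoff sequence T = (1,1,2,1,1,2,4,1,1,2,1,1,2,4,8,…), defined recursively by: if k = 2^i − 1 then T_k = 2^(i−1), else T_k = T_{k − 2^(i−1) + 1} where i is the unique integer with 2^(i−1) ≤ k < 2^i − 1. Then for every j ≥ 0 and every n, the number of indices k ≤ 2^(j+1) − 1 with T_k = 2^j is exactly 1, and more generally each value 2^m appears exactly 2^(j−m) times among the first 2^(j+1) − 1 terms; hence the total time Σ_{k ≤ 2^(j+1)−1} T_k = (j+1)·2^j. -/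
/-!
The first `2 ^ (j + 1) - 1` terms of the Luby sequence are two copies of its first `2 ^ j - 1`
terms followed by the single term `2 ^ j`. Hence every additive statistic `∑ f (T k)` of the
block of level `j + 1` is twice that of level `j` plus `f (2 ^ j)`, and both the counts of each
value `2 ^ m` and the total time follow by induction on `j`.
-/

open Finset

theorem sum_Icc_one_two_mul_add_one {M : Type*} [AddCommMonoid M] (g : ℕ → M) (n : ℕ) :
    ∑ k ∈ Icc 1 (2 * n + 1), g k =
      ∑ k ∈ Icc 1 n, g k + ∑ k ∈ Icc 1 n, g (k + n) + g (2 * n + 1) := by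
  have Icc_one (b : ℕ) : Icc 1 b = Ioc 0 b := Icc_add_one_left_eq_Ioc 0 b
  have shift : ∑ k ∈ Icc 1 n, g (k + n) = ∑ k ∈ Ioc n (2 * n), g k := by
    rw [← Icc_add_one_left_eq_Ioc, two_mul, add_comm n 1, ← map_add_right_Icc, sum_map]
    rfl
  rw [sum_Icc_succ_top (by omega), shift, Icc_one, Icc_one,
    sum_Ioc_consecutive _ (Nat.zero_le n) (by omega : n ≤ 2 * n)]

section Luby

variable {T : ℕ → ℕ}

theorem luby_add_two_pow_sub_one
    (h2 : ∀ i k : ℕ, 2 ^ (i - 1) ≤ k → k < 2 ^ i - 1 → T k = T (k - 2 ^ (i - 1) + 1))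
    {j k : ℕ} (hk : k ∈ Icc 1 (2 ^ j - 1)) : T (k + (2 ^ j - 1)) = T k := by
  rw [mem_Icc] at hk
  have hj : 1 ≤ 2 ^ j := Nat.one_le_two_pow
  have hperiod := h2 (j + 1) (k + (2 ^ j - 1)) (by rw [Nat.add_sub_cancel]; omega)
    (by rw [pow_succ]; omega)
  rw [hperiod, Nat.add_sub_cancel]
  congr 1
  omega

theorem luby_sum_comp_succ {M : Type*} [AddCommMonoid M]
    (h1 : ∀ i : ℕ, 1 ≤ i → T (2 ^ i - 1) = 2 ^ (i - 1))
    (h2 : ∀ i k : ℕ, 2 ^ (i - 1) ≤ k → k < 2 ^ i - 1 → T k = T (k - 2 ^ (i - 1) + 1))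
    (f : ℕ → M) (j : ℕ) :
    ∑ k ∈ Icc 1 (2 ^ (j + 1) - 1), f (T k) =
      2 • ∑ k ∈ Icc 1 (2 ^ j - 1), f (T k) + f (2 ^ j) := by
  have hlast : 2 ^ (j + 1) - 1 = 2 * (2 ^ j - 1) + 1 := by
    have : 1 ≤ 2 ^ j := Nat.one_le_two_pow
    rw [pow_succ]; omega
  rw [hlast, sum_Icc_one_two_mul_add_one, ← hlast, h1 (j + 1) (by omega), Nat.add_sub_cancel,
    sum_congr rfl fun k hk => congrArg f (luby_add_two_pow_sub_one h2 hk), two_nsmul]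

theorem luby_card_filter_eq
    (h1 : ∀ i : ℕ, 1 ≤ i → T (2 ^ i - 1) = 2 ^ (i - 1))
    (h2 : ∀ i k : ℕ, 2 ^ (i - 1) ≤ k → k < 2 ^ i - 1 → T k = T (k - 2 ^ (i - 1) + 1))
    (j m : ℕ) :
    #{k ∈ Icc 1 (2 ^ (j + 1) - 1) | T k = 2 ^ m} = if m ≤ j then 2 ^ (j - m) else 0 := by
  have step (j : ℕ) : #{k ∈ Icc 1 (2 ^ (j + 1) - 1) | T k = 2 ^ m} =
      2 * #{k ∈ Icc 1 (2 ^ j - 1) | T k = 2 ^ m} + if j = m then 1 else 0 := by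
    simp only [card_filter, luby_sum_comp_succ h1 h2 (fun v => if v = 2 ^ m then 1 else 0),
      Nat.pow_right_inj one_lt_two, smul_eq_mul]
  induction j with
  | zero => rw [step]; rcases m with _ | m <;> simp
  | succ j ih =>
    rw [step, ih]
    rcases lt_trichotomy m (j + 1) with hm | rfl | hm
    · rw [if_pos (by omega), if_pos hm.le, if_neg (by omega), Nat.sub_add_comm (by omega), pow_succ]
      ring
    · simp
    · rw [if_neg (by omega), if_neg (by omega), if_neg (by omega)]

theorem luby_sum_eq
    (h1 : ∀ i : ℕ, 1 ≤ i → T (2 ^ i - 1) = 2 ^ (i - 1))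
    (h2 : ∀ i k : ℕ, 2 ^ (i - 1) ≤ k → k < 2 ^ i - 1 → T k = T (k - 2 ^ (i - 1) + 1))
    (j : ℕ) : ∑ k ∈ Icc 1 (2 ^ (j + 1) - 1), T k = (j + 1) * 2 ^ j := by
  induction j with
  | zero => simpa using luby_sum_comp_succ h1 h2 (fun v => v) 0
  | succ j ih =>
    rw [luby_sum_comp_succ h1 h2 (fun v => v), ih, smul_eq_mul]
    ring

end Luby

/-- Luby universal cutoff sequence `T = (1,1,2,1,1,2,4,1,1,2,1,1,2,4,8,…)`
(indexed from 1), defined recursively by `T (2^i - 1) = 2^(i-1)` for `i ≥ 1`,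
and `T k = T (k - 2^(i-1) + 1)` whenever `2^(i-1) ≤ k < 2^i - 1`. Then among
the first `2^(j+1) - 1` terms, each value `2^m` (for `m ≤ j`) appears exactly
`2^(j-m)` times (in particular the value `2^j` appears exactly once), and the
total time is `∑_{k ≤ 2^(j+1)-1} T k = (j+1) * 2^j`. -/
theorem luby_sequence_counting (T : ℕ → ℕ)
    (h1 : ∀ i : ℕ, 1 ≤ i → T (2 ^ i - 1) = 2 ^ (i - 1))
    (h2 : ∀ i k : ℕ, 2 ^ (i - 1) ≤ k → k < 2 ^ i - 1 →
      T k = T (k - 2 ^ (i - 1) + 1)) (j : ℕ) :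
    ((Finset.Icc 1 (2 ^ (j + 1) - 1)).filter (fun k => T k = 2 ^ j)).card = 1 ∧
    (∀ m : ℕ, m ≤ j →
      ((Finset.Icc 1 (2 ^ (j + 1) - 1)).filter
        (fun k => T k = 2 ^ m)).card = 2 ^ (j - m)) ∧
    (∑ k ∈ Finset.Icc 1 (2 ^ (j + 1) - 1), T k) = (j + 1) * 2 ^ j := by
  refine ⟨?_, fun m hm => ?_, luby_sum_eq h1 h2 j⟩
  · simpa using luby_card_filter_eq h1 h2 j j
  · simpa [hm] using luby_card_filter_eq h1 h2 j m
end

section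
/- Let runtime X satisfy: X = s(n) with probability q(n) = n^(−c) (for constants c > 0) and X = 2^n otherwise, with s(n) ≤ n^a for a constant a. Then E[X] grows exponentially in n, but the expected restart runtime with cutoff s(n), namely s(n)/q(n) ≤ n^(a+c), is polynomial in n. Hence there exist runtime distributions where the mean is exponential while the optimal restart strategy is polynomial. -/
open Filter

/-- Left heavy tail signature: if the runtime is `s n ≤ n ^ a` with probability
`q n = n ^ (-c)` and `2 ^ n` otherwise, then the mean runtime
`n^(-c) * s n + (1 - n^(-c)) * 2^n` grows exponentially in `n`, while the
expected restart runtime with cutoff `s n`, namely `s n / n ^ (-c)`, is at most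
`n ^ (a + c)`, i.e. polynomial in `n`. -/
theorem exponential_mean_polynomial_restart (a c : ℝ) (hc : 0 < c)
    (s : ℕ → ℝ) (hs0 : ∀ n, 0 ≤ s n)
    (hs : ∀ n : ℕ, 1 ≤ n → s n ≤ (n : ℝ) ^ a) :
    (∃ b : ℝ, 1 < b ∧ ∀ᶠ n : ℕ in atTop,
      b ^ n ≤ (n : ℝ) ^ (-c) * s n + (1 - (n : ℝ) ^ (-c)) * 2 ^ n) ∧
    (∀ n : ℕ, 1 ≤ n → s n / (n : ℝ) ^ (-c) ≤ (n : ℝ) ^ (a + c)) := by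
  constructor
  · refine ⟨3/2, by norm_num, ?_⟩
    have h1 : Tendsto (fun n : ℕ => (n : ℝ) ^ (-c)) atTop (nhds 0) :=
      (tendsto_rpow_neg_atTop hc).comp tendsto_natCast_atTop_atTop
    have h2 : Tendsto (fun n : ℕ => ((3:ℝ)/4) ^ n) atTop (nhds 0) :=
      tendsto_pow_atTop_nhds_zero_of_lt_one (by norm_num) (by norm_num)
    have e1 : ∀ᶠ n : ℕ in atTop, (n : ℝ) ^ (-c) ≤ 1/2 := by
      filter_upwards [h1.eventually (eventually_le_nhds (by norm_num : (0:ℝ) < 1/2))]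
        with n h using h
    have e2 : ∀ᶠ n : ℕ in atTop, ((3:ℝ)/4) ^ n ≤ 1/2 := by
      filter_upwards [h2.eventually (eventually_le_nhds (by norm_num : (0:ℝ) < 1/2))]
        with n h using h
    filter_upwards [e1, e2] with n h1 h2
    have hpow : ((3:ℝ)/2) ^ n = ((3:ℝ)/4) ^ n * 2 ^ n := by
      rw [← mul_pow]; norm_num
    have h2n : (0:ℝ) ≤ 2 ^ n := by positivity
    have hnc : (0:ℝ) ≤ (n : ℝ) ^ (-c) := Real.rpow_nonneg (Nat.cast_nonneg n) _
    calc ((3:ℝ)/2) ^ n = ((3:ℝ)/4) ^ n * 2 ^ n := hpow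
      _ ≤ (1/2) * 2 ^ n := by gcongr
      _ ≤ (1 - (n : ℝ) ^ (-c)) * 2 ^ n := by gcongr; linarith
      _ ≤ (n : ℝ) ^ (-c) * s n + (1 - (n : ℝ) ^ (-c)) * 2 ^ n := by
          nlinarith [hs0 n]
  · intro n hn
    have hn0 : (0:ℝ) < n := by exact_mod_cast hn
    have hpos : (0:ℝ) < (n : ℝ) ^ (-c) := Real.rpow_pos_of_pos hn0 _
    rw [div_le_iff₀ hpos, Real.rpow_add hn0, Real.rpow_neg hn0.le,
      mul_assoc, mul_inv_cancel₀ (Real.rpow_pos_of_pos hn0 c).ne', mul_one]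
    exact hs n hn
end
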